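/- arXiv:2602.06658 — 2 statements merged into one kernel-verified Lean document; each statement's English description precedes it below -/
import Mathlib

section
/- Let α be a compactly supported centered Borel probability measure on ℝ^D and β a compactly supported centered Borel probability measure on ℝ^E (centered meaning ∫ x dα = 0 and ∫ y dβ = 0), each space being endowed with the squared Euclidean cost. Then for every ε ≥ 0, the entropic Gromov–Wasserstein cost satisfies GW_ε(α,β) = C(α,β) + inf over Γ ∈ ℝ^{D×E} of ( 8‖Γ‖_F² + OT_ε^Γ(α,β) ), where ‖·‖_F is the Frobenius norm. -/
open MeasureTheory Classical

/-- Kullback–Leibler divergence, with value `⊤` when `π` is not absolutely continuous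
with respect to `μ` or the log-likelihood ratio is not integrable. -/
noncomputable def klE {Z : Type*} [MeasurableSpace Z] (π μ : Measure Z) : EReal :=
  if π ≪ μ ∧ Integrable (llr π μ) π then ((∫ z, llr π μ z ∂π : ℝ) : EReal) else ⊤

/-- The set of couplings between `α` and `β`. -/
def couplings {X Y : Type*} [MeasurableSpace X] [MeasurableSpace Y]
    (α : Measure X) (β : Measure Y) : Set (Measure (X × Y)) :=
  {π | π.map Prod.fst = α ∧ π.map Prod.snd = β}

/-
For a coupling `π` of the centred measures `α` and `β`, expand the integrand of the
Gromov–Wasserstein loss and integrate against `π ⊗ π`: centring kills every term that is linear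
in `x` or in `y`, and what is left is
`L(π) = C(α, β) - 4 ∫ ‖x‖²‖y‖² dπ - 8 ‖M_π‖²_F` with `M_π = ∫ x yᵀ dπ`.
Completing the square, `-8 ‖M‖²_F = min_Γ (8 ‖Γ‖²_F - 16 ⟨Γ, M⟩_F)`, attained at `Γ = M`, so
`L(π) = C(α, β) + min_Γ (8 ‖Γ‖²_F + ∫ c_Γ dπ)`. The entropic term does not depend on `Γ`, hence the
infimum over `π` and the minimum over `Γ` can be exchanged.
-/

namespace EReal

theorem coe_add_iInf {ι : Sort*} (a : ℝ) (f : ι → EReal) :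
    (a : EReal) + ⨅ i, f i = ⨅ i, (a + f i) :=
  Monotone.map_iInf_of_continuousAt (f := fun x ↦ (a : EReal) + x)
    ((EReal.continuousAt_add (p := ((a : EReal), ⨅ i, f i)) (by simp) (by simp)).comp
      (continuous_const.prodMk continuous_id).continuousAt)
    (fun _ _ h ↦ add_le_add_right h _) (by simp)

end EReal

theorem biInf_add_eq_iInf_biInf {α ι κ : Type*} [CompleteLattice α] [Add α] [AddRightMono α]
    {s : Set ι} {g : ι → α} {h : κ → ι → α} (k : ι → α)
    (hle : ∀ i ∈ s, ∀ j, g i ≤ h j i) (hex : ∀ i ∈ s, ∃ j, h j i = g i) :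
    ⨅ i ∈ s, (g i + k i) = ⨅ j, ⨅ i ∈ s, (h j i + k i) := by
  refine le_antisymm (le_iInf₂ fun j i ↦ le_iInf fun hi ↦ ?_) (le_iInf₂ fun i hi ↦ ?_)
  · exact (iInf₂_le i hi).trans (add_le_add_left (hle i hi j) _)
  · obtain ⟨j, hj⟩ := hex i hi
    exact (iInf_le _ j).trans ((iInf₂_le i hi).trans_eq (by rw [hj]))

theorem Continuous.integrable_of_ae_mem_compact {Z F : Type*} [MeasurableSpace Z]
    [TopologicalSpace Z] [OpensMeasurableSpace Z] [T2Space Z] [NormedAddCommGroup F]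
    {μ : Measure Z} [IsFiniteMeasure μ] {K : Set Z} {f : Z → F} (hf : Continuous f)
    (hK : IsCompact K) (hμK : ∀ᵐ z ∂μ, z ∈ K) : Integrable f μ :=
  (hf.continuousOn.integrableOn_compact hK).integrable_of_ae_notMem_eq_zero
    (hμK.mono fun _ hz hz' ↦ absurd hz hz')

theorem ae_mem_prod_of_ae_mem {X Y : Type*} [MeasurableSpace X] [MeasurableSpace Y]
    {μ : Measure X} {ν : Measure Y} [SFinite μ] [SFinite ν] {s : Set X} {t : Set Y}
    (hs : ∀ᵐ x ∂μ, x ∈ s) (ht : ∀ᵐ y ∂ν, y ∈ t) : ∀ᵐ z ∂μ.prod ν, z ∈ s ×ˢ t :=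
  (Measure.quasiMeasurePreserving_fst.ae hs).and (Measure.quasiMeasurePreserving_snd.ae ht)

section Couplings

variable {X Y : Type*} [MeasurableSpace X] [MeasurableSpace Y] {α : Measure X} {β : Measure Y}
  {π : Measure (X × Y)}

theorem isProbabilityMeasure_of_mem_couplings [IsProbabilityMeasure α] (hπ : π ∈ couplings α β) :
    IsProbabilityMeasure π := by
  have : IsProbabilityMeasure (π.map Prod.fst) := hπ.1 ▸ ‹_›
  exact Measure.isProbabilityMeasure_of_map Prod.fst

theorem ae_mem_prod_of_mem_couplings (hπ : π ∈ couplings α β) {s : Set X} {t : Set Y}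
    (hs : ∀ᵐ x ∂α, x ∈ s) (ht : ∀ᵐ y ∂β, y ∈ t) : ∀ᵐ p ∂π, p ∈ s ×ˢ t :=
  (ae_of_ae_map measurable_fst.aemeasurable (hπ.1 ▸ hs)).and
    (ae_of_ae_map measurable_snd.aemeasurable (hπ.2 ▸ ht))

end Couplings

section MapEq

variable {Z X F : Type*} [MeasurableSpace Z] [MeasurableSpace X] [NormedAddCommGroup F]
  [NormedSpace ℝ F] {π : Measure Z} {α : Measure X} {f : Z → X}

theorem integral_comp_of_map_eq (hf : Measurable f) (hπ : π.map f = α) {g : X → F}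
    (hg : AEStronglyMeasurable g α) : ∫ z, g (f z) ∂π = ∫ x, g x ∂α := by
  subst hπ
  exact (integral_map hf.aemeasurable hg).symm

theorem integral_prod_comp_of_map_eq [SFinite π] (hf : Measurable f) (hπ : π.map f = α)
    {G : X × X → F} (hG : AEStronglyMeasurable G (α.prod α)) :
    ∫ z, G (f z.1, f z.2) ∂π.prod π = ∫ w, G w ∂α.prod α := by
  subst hπ
  rw [Measure.map_prod_map π π hf hf] at hG ⊢
  exact (integral_map (hf.prodMap hf).aemeasurable hG).symm

end MapEq

theorem EuclideanSpace.norm_sub_sq_eq {n : ℕ} (x x' : EuclideanSpace ℝ (Fin n)) :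
    ‖x - x'‖ ^ 2 = ‖x‖ ^ 2 - 2 * ∑ i, x i * x' i + ‖x'‖ ^ 2 := by
  simp [norm_sub_sq_real, PiLp.inner_apply, mul_comm]

section GromovWasserstein

variable {D E : ℕ}

noncomputable def crossMoment (π : Measure (EuclideanSpace ℝ (Fin D) × EuclideanSpace ℝ (Fin E))) :
    Matrix (Fin D) (Fin E) ℝ :=
  fun i j ↦ ∫ p, p.1 i * p.2 j ∂π

theorem gw_integrand_expand (x x' : EuclideanSpace ℝ (Fin D)) (y y' : EuclideanSpace ℝ (Fin E)) :
    (‖x - x'‖ ^ 2 - ‖y - y'‖ ^ 2) ^ 2 =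
      ‖x - x'‖ ^ 4 + ‖y - y'‖ ^ 4
        - 2 * (‖x‖ ^ 2 * ‖y‖ ^ 2) - 2 * (‖x'‖ ^ 2 * ‖y'‖ ^ 2)
        - 2 * (‖x‖ ^ 2 * ‖y'‖ ^ 2) - 2 * (‖y‖ ^ 2 * ‖x'‖ ^ 2)
        + 4 * ∑ j, ‖x‖ ^ 2 * y j * y' j + 4 * ∑ j, y j * (‖x'‖ ^ 2 * y' j)
        + 4 * ∑ i, ‖y‖ ^ 2 * x i * x' i + 4 * ∑ i, x i * (‖y'‖ ^ 2 * x' i)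
        - 8 * ∑ i, ∑ j, x i * y j * (x' i * y' j) := by
  have hcross : ∑ i, ∑ j, x i * y j * (x' i * y' j) = (∑ i, x i * x' i) * ∑ j, y j * y' j := by
    simp only [Finset.sum_mul_sum]
    exact Finset.sum_congr rfl fun i _ ↦ Finset.sum_congr rfl fun j _ ↦ by ring
  rw [hcross]
  simp only [mul_assoc, ← Finset.mul_sum, mul_left_comm _ (‖x'‖ ^ 2), mul_left_comm _ (‖y'‖ ^ 2)]
  rw [show ‖x - x'‖ ^ 4 = (‖x - x'‖ ^ 2) ^ 2 by ring,
    show ‖y - y'‖ ^ 4 = (‖y - y'‖ ^ 2) ^ 2 by ring,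
    EuclideanSpace.norm_sub_sq_eq x x', EuclideanSpace.norm_sub_sq_eq y y']
  ring

theorem integral_integral_gw_integrand
    {π : Measure (EuclideanSpace ℝ (Fin D) × EuclideanSpace ℝ (Fin E))} [IsProbabilityMeasure π]
    {K : Set (EuclideanSpace ℝ (Fin D) × EuclideanSpace ℝ (Fin E))} (hK : IsCompact K)
    (hπK : ∀ᵐ p ∂π, p ∈ K) (hx0 : ∀ i, ∫ p, p.1 i ∂π = 0) (hy0 : ∀ j, ∫ p, p.2 j ∂π = 0) :
    ∫ p, ∫ q, (‖p.1 - q.1‖ ^ 2 - ‖p.2 - q.2‖ ^ 2) ^ 2 ∂π ∂π =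
      ∫ z, ‖z.1.1 - z.2.1‖ ^ 4 ∂π.prod π + ∫ z, ‖z.1.2 - z.2.2‖ ^ 4 ∂π.prod π
        - 4 * (∫ p, ‖p.1‖ ^ 2 ∂π) * (∫ p, ‖p.2‖ ^ 2 ∂π) - 4 * ∫ p, ‖p.1‖ ^ 2 * ‖p.2‖ ^ 2 ∂π
        - 8 * ∑ i, ∑ j, crossMoment π i j ^ 2 := by
  have hint : ∀ f : _ → ℝ, Continuous f → Integrable f (π.prod π) := fun f hf ↦
    hf.integrable_of_ae_mem_compact (hK.prod hK) (ae_mem_prod_of_ae_mem hπK hπK)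
  rw [← integral_prod (μ := π) (ν := π) (fun z ↦ (‖z.1.1 - z.2.1‖ ^ 2 - ‖z.1.2 - z.2.2‖ ^ 2) ^ 2)
    (hint _ (by fun_prop))]
  simp_rw [gw_integrand_expand]
  simp (disch := first | (apply hint; fun_prop) | (intro _ _; apply hint; fun_prop)) only
    [integral_add, integral_sub, integral_const_mul, integral_finsetSum]
  have hx : ∀ (f : _ → ℝ) i, ∫ z, f z.1 * z.2.1 i ∂π.prod π = 0 := fun f i ↦ by
    rw [integral_prod_mul (ν := π) f fun q ↦ q.1 i, hx0, mul_zero]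
  have hy : ∀ (f : _ → ℝ) j, ∫ z, f z.1 * z.2.2 j ∂π.prod π = 0 := fun f j ↦ by
    rw [integral_prod_mul (ν := π) f fun q ↦ q.2 j, hy0, mul_zero]
  have hx' : ∀ (g : _ → ℝ) i, ∫ z, z.1.1 i * g z.2 ∂π.prod π = 0 := fun g i ↦ by
    rw [integral_prod_mul (μ := π) (fun p ↦ p.1 i) g, hx0, zero_mul]
  have hy' : ∀ (g : _ → ℝ) j, ∫ z, z.1.2 j * g z.2 ∂π.prod π = 0 := fun g j ↦ by
    rw [integral_prod_mul (μ := π) (fun p ↦ p.2 j) g, hy0, zero_mul]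
  rw [Finset.sum_eq_zero fun j _ ↦ hy (fun p ↦ ‖p.1‖ ^ 2 * p.2 j) j,
    Finset.sum_eq_zero fun j _ ↦ hy' (fun q ↦ ‖q.1‖ ^ 2 * q.2 j) j,
    Finset.sum_eq_zero fun i _ ↦ hx (fun p ↦ ‖p.2‖ ^ 2 * p.1 i) i,
    Finset.sum_eq_zero fun i _ ↦ hx' (fun q ↦ ‖q.2‖ ^ 2 * q.1 i) i,
    integral_fun_fst (μ := π) (ν := π) fun p ↦ ‖p.1‖ ^ 2 * ‖p.2‖ ^ 2,
    integral_fun_snd (μ := π) (ν := π) fun p ↦ ‖p.1‖ ^ 2 * ‖p.2‖ ^ 2,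
    integral_prod_mul (μ := π) (ν := π) (fun p ↦ ‖p.1‖ ^ 2) fun q ↦ ‖q.2‖ ^ 2,
    integral_prod_mul (μ := π) (ν := π) (fun p ↦ ‖p.2‖ ^ 2) fun q ↦ ‖q.1‖ ^ 2]
  simp only [fun i j ↦ integral_prod_mul (μ := π) (ν := π) (fun p ↦ p.1 i * p.2 j)
      fun p ↦ p.1 i * p.2 j, probReal_univ, one_smul, crossMoment, sq]
  ring

theorem integral_dual_cost {π : Measure (EuclideanSpace ℝ (Fin D) × EuclideanSpace ℝ (Fin E))}
    [IsFiniteMeasure π] {K : Set (EuclideanSpace ℝ (Fin D) × EuclideanSpace ℝ (Fin E))}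
    (hK : IsCompact K) (hπK : ∀ᵐ p ∂π, p ∈ K) (Γ : Matrix (Fin D) (Fin E) ℝ) :
    ∫ p, (-16 * ∑ i, ∑ j, Γ i j * (p.1 i * p.2 j) - 4 * ‖p.1‖ ^ 2 * ‖p.2‖ ^ 2) ∂π =
      -16 * ∑ i, ∑ j, Γ i j * crossMoment π i j - 4 * ∫ p, ‖p.1‖ ^ 2 * ‖p.2‖ ^ 2 ∂π := by
  have hint : ∀ f : _ → ℝ, Continuous f → Integrable f π := fun f hf ↦
    hf.integrable_of_ae_mem_compact hK hπK
  simp only [mul_assoc]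
  simp (disch := first | (apply hint; fun_prop) | (intro _ _; apply hint; fun_prop)) only
    [integral_sub, integral_const_mul, integral_finsetSum, crossMoment]

theorem integral_integral_gw_integrand_of_mem_couplings
    {α : Measure (EuclideanSpace ℝ (Fin D))} {β : Measure (EuclideanSpace ℝ (Fin E))}
    [IsProbabilityMeasure α] [IsProbabilityMeasure β]
    {π : Measure (EuclideanSpace ℝ (Fin D) × EuclideanSpace ℝ (Fin E))}
    {KX : Set (EuclideanSpace ℝ (Fin D))} {KY : Set (EuclideanSpace ℝ (Fin E))}
    (hKX : IsCompact KX) (hKY : IsCompact KY) (hαK : ∀ᵐ x ∂α, x ∈ KX) (hβK : ∀ᵐ y ∂β, y ∈ KY)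
    (hα0 : ∫ x, x ∂α = 0) (hβ0 : ∫ y, y ∂β = 0) (hπ : π ∈ couplings α β) :
    ∫ p, ∫ q, (‖p.1 - q.1‖ ^ 2 - ‖p.2 - q.2‖ ^ 2) ^ 2 ∂π ∂π =
      (∫ x, ∫ x', ‖x - x'‖ ^ 4 ∂α ∂α) + (∫ y, ∫ y', ‖y - y'‖ ^ 4 ∂β ∂β)
        - 4 * (∫ x, ‖x‖ ^ 2 ∂α) * (∫ y, ‖y‖ ^ 2 ∂β)
        - 4 * ∫ p, ‖p.1‖ ^ 2 * ‖p.2‖ ^ 2 ∂π - 8 * ∑ i, ∑ j, crossMoment π i j ^ 2 := by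
  have := isProbabilityMeasure_of_mem_couplings hπ
  have hπK := ae_mem_prod_of_mem_couplings hπ hαK hβK
  have hx0 : ∀ i, ∫ p, p.1 i ∂π = 0 := fun i ↦ by
    rw [integral_comp_of_map_eq measurable_fst hπ.1 (g := fun x ↦ x i) (by fun_prop),
      ← eval_integral_piLp fun i ↦
        (by fun_prop : Continuous _).integrable_of_ae_mem_compact hKX hαK,
      hα0, PiLp.zero_apply]
  have hy0 : ∀ j, ∫ p, p.2 j ∂π = 0 := fun j ↦ by
    rw [integral_comp_of_map_eq measurable_snd hπ.2 (g := fun y ↦ y j) (by fun_prop),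
      ← eval_integral_piLp fun j ↦
        (by fun_prop : Continuous _).integrable_of_ae_mem_compact hKY hβK,
      hβ0, PiLp.zero_apply]
  have hXX : ∫ z, ‖z.1.1 - z.2.1‖ ^ 4 ∂π.prod π = ∫ x, ∫ x', ‖x - x'‖ ^ 4 ∂α ∂α := by
    rw [integral_prod_comp_of_map_eq measurable_fst hπ.1 (G := fun w ↦ ‖w.1 - w.2‖ ^ 4)
      (by fun_prop), integral_prod _ ((by fun_prop : Continuous _).integrable_of_ae_mem_compact
        (hKX.prod hKX) (ae_mem_prod_of_ae_mem hαK hαK))]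
  have hYY : ∫ z, ‖z.1.2 - z.2.2‖ ^ 4 ∂π.prod π = ∫ y, ∫ y', ‖y - y'‖ ^ 4 ∂β ∂β := by
    rw [integral_prod_comp_of_map_eq measurable_snd hπ.2 (G := fun w ↦ ‖w.1 - w.2‖ ^ 4)
      (by fun_prop), integral_prod _ ((by fun_prop : Continuous _).integrable_of_ae_mem_compact
        (hKY.prod hKY) (ae_mem_prod_of_ae_mem hβK hβK))]
  rw [integral_integral_gw_integrand (hKX.prod hKY) hπK hx0 hy0, hXX, hYY,
    integral_comp_of_map_eq measurable_fst hπ.1 (g := fun x ↦ ‖x‖ ^ 2) (by fun_prop),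
    integral_comp_of_map_eq measurable_snd hπ.2 (g := fun y ↦ ‖y‖ ^ 2) (by fun_prop)]

theorem gw_dual_objective_eq_of_mem_couplings
    {α : Measure (EuclideanSpace ℝ (Fin D))} {β : Measure (EuclideanSpace ℝ (Fin E))}
    [IsProbabilityMeasure α] [IsProbabilityMeasure β]
    {π : Measure (EuclideanSpace ℝ (Fin D) × EuclideanSpace ℝ (Fin E))}
    {KX : Set (EuclideanSpace ℝ (Fin D))} {KY : Set (EuclideanSpace ℝ (Fin E))}
    (hKX : IsCompact KX) (hKY : IsCompact KY) (hαK : ∀ᵐ x ∂α, x ∈ KX) (hβK : ∀ᵐ y ∂β, y ∈ KY)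
    (hα0 : ∫ x, x ∂α = 0) (hβ0 : ∫ y, y ∂β = 0) (hπ : π ∈ couplings α β)
    (Γ : Matrix (Fin D) (Fin E) ℝ) :
    (∫ x, ∫ x', ‖x - x'‖ ^ 4 ∂α ∂α) + (∫ y, ∫ y', ‖y - y'‖ ^ 4 ∂β ∂β)
        - 4 * (∫ x, ‖x‖ ^ 2 ∂α) * (∫ y, ‖y‖ ^ 2 ∂β) + 8 * ∑ i, ∑ j, Γ i j ^ 2
        + ∫ p, (-16 * ∑ i, ∑ j, Γ i j * (p.1 i * p.2 j) - 4 * ‖p.1‖ ^ 2 * ‖p.2‖ ^ 2) ∂π =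
      ∫ p, ∫ q, (‖p.1 - q.1‖ ^ 2 - ‖p.2 - q.2‖ ^ 2) ^ 2 ∂π ∂π
        + 8 * ∑ i, ∑ j, (Γ i j - crossMoment π i j) ^ 2 := by
  have := isProbabilityMeasure_of_mem_couplings hπ
  rw [integral_integral_gw_integrand_of_mem_couplings hKX hKY hαK hβK hα0 hβ0 hπ,
    integral_dual_cost (hKX.prod hKY) (ae_mem_prod_of_mem_couplings hπ hαK hβK)]
  simp only [sub_sq, Finset.sum_add_distrib, Finset.sum_sub_distrib, mul_assoc, ← Finset.mul_sum]
  ring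

end GromovWasserstein

theorem egw_dual_decomposition_general {D E : ℕ}
    (α : Measure (EuclideanSpace ℝ (Fin D))) (β : Measure (EuclideanSpace ℝ (Fin E)))
    [IsProbabilityMeasure α] [IsProbabilityMeasure β]
    (KX : Set (EuclideanSpace ℝ (Fin D))) (KY : Set (EuclideanSpace ℝ (Fin E)))
    (hKX : IsCompact KX) (hKY : IsCompact KY) (hαK : α KXᶜ = 0) (hβK : β KYᶜ = 0)
    (hαcentered : ∫ x, x ∂α = 0) (hβcentered : ∫ y, y ∂β = 0)
    (ε : ℝ) :
    (⨅ π ∈ couplings α β,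
        (((∫ p, ∫ q, (‖p.1 - q.1‖ ^ 2 - ‖p.2 - q.2‖ ^ 2) ^ 2 ∂π ∂π : ℝ)) : EReal)
          + (ε : EReal) * klE π (α.prod β)) =
      ((((∫ x, ∫ x', ‖x - x'‖ ^ 4 ∂α ∂α) + (∫ y, ∫ y', ‖y - y'‖ ^ 4 ∂β ∂β)
          - 4 * (∫ x, ‖x‖ ^ 2 ∂α) * (∫ y, ‖y‖ ^ 2 ∂β) : ℝ)) : EReal)
        + ⨅ Γ : Matrix (Fin D) (Fin E) ℝ,
            (((8 * ∑ i, ∑ j, (Γ i j) ^ 2 : ℝ)) : EReal)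
              + ⨅ π ∈ couplings α β,
                  (((∫ p, (-16 * ∑ i, ∑ j, Γ i j * (p.1 i * p.2 j)
                      - 4 * ‖p.1‖ ^ 2 * ‖p.2‖ ^ 2) ∂π : ℝ)) : EReal)
                    + (ε : EReal) * klE π (α.prod β) := by
  have key := fun π (hπ : π ∈ couplings α β) ↦ gw_dual_objective_eq_of_mem_couplings hKX hKY
    (ae_iff.mpr hαK) (ae_iff.mpr hβK) hαcentered hβcentered hπ
  simp only [EReal.coe_add_iInf, ← add_assoc, ← EReal.coe_add]
  refine biInf_add_eq_iInf_biInf _ (fun π hπ Γ ↦ ?_) (fun π hπ ↦ ⟨crossMoment π, ?_⟩)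
  · rw [EReal.coe_le_coe_iff, key π hπ Γ, le_add_iff_nonneg_right]
    positivity
  · rw [key π hπ]
    simp

/-- dual decomposition of the entropic Gromov–Wasserstein cost
with squared Euclidean costs. -/
theorem egw_dual_decomposition {D E : ℕ}
    (α : Measure (EuclideanSpace ℝ (Fin D))) (β : Measure (EuclideanSpace ℝ (Fin E)))
    [IsProbabilityMeasure α] [IsProbabilityMeasure β]
    (KX : Set (EuclideanSpace ℝ (Fin D))) (KY : Set (EuclideanSpace ℝ (Fin E)))
    (hKX : IsCompact KX) (hKY : IsCompact KY) (hαK : α KXᶜ = 0) (hβK : β KYᶜ = 0)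
    (hαcentered : ∫ x, x ∂α = 0) (hβcentered : ∫ y, y ∂β = 0)
    (ε : ℝ) (hε : 0 ≤ ε) :
    (⨅ π ∈ couplings α β,
        (((∫ p, ∫ q, (‖p.1 - q.1‖ ^ 2 - ‖p.2 - q.2‖ ^ 2) ^ 2 ∂π ∂π : ℝ)) : EReal)
          + (ε : EReal) * klE π (α.prod β)) =
      ((((∫ x, ∫ x', ‖x - x'‖ ^ 4 ∂α ∂α) + (∫ y, ∫ y', ‖y - y'‖ ^ 4 ∂β ∂β)
          - 4 * (∫ x, ‖x‖ ^ 2 ∂α) * (∫ y, ‖y‖ ^ 2 ∂β) : ℝ)) : EReal)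
        + ⨅ Γ : Matrix (Fin D) (Fin E) ℝ,
            (((8 * ∑ i, ∑ j, (Γ i j) ^ 2 : ℝ)) : EReal)
              + ⨅ π ∈ couplings α β,
                  (((∫ p, (-16 * ∑ i, ∑ j, Γ i j * (p.1 i * p.2 j)
                      - 4 * ‖p.1‖ ^ 2 * ‖p.2‖ ^ 2) ∂π : ℝ)) : EReal)
                    + (ε : EReal) * klE π (α.prod β) :=
  egw_dual_decomposition_general α β KX KY hKX hKY hαK hβK hαcentered hβcentered ε
end

section
/- Let X and Y be compact metric spaces, c : X × Y → ℝ a continuous nonnegative cost, and α, β Borel probability measures on X and Y. For each ε > 0 let π_ε ∈ Π(α,β) be a coupling attaining the infimum in OT_ε(α,β). Then π_ε converges to the product measure α⊗β in total variation as ε → +∞: ‖π_ε − α⊗β‖_TV → 0. -/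
open MeasureTheory Classical Filter

/-- Entropic optimal transport cost for a cost `c`, temperature `ε`. -/
noncomputable def otE {X Y : Type*} [MeasurableSpace X] [MeasurableSpace Y]
    (c : X → Y → ℝ) (ε : ℝ) (α : Measure X) (β : Measure Y) [SFinite β] : EReal :=
  ⨅ π ∈ {π : Measure (X × Y) | π.map Prod.fst = α ∧ π.map Prod.snd = β},
    ((∫ p, c p.1 p.2 ∂π : ℝ) : EReal) + (ε : EReal) * klE π (α.prod β)

/-!
The product coupling `α ⊗ β` is admissible and has zero entropy, so
`OT_ε(α, β) ≤ ∫ c d(α ⊗ β)`. Since `c ≥ 0`, an optimal plan then satisfies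
`ε · KL(π_ε ‖ α ⊗ β) ≤ ∫ c d(α ⊗ β)`, and Pinsker's inequality `‖π - μ‖_TV ≤ 2 √KL(π ‖ μ)`
gives `‖π_ε - α ⊗ β‖_TV = O(ε^(-1/2))`.

Pinsker's inequality follows from the pointwise bound `(√x - 1)² ≤ x log x + 1 - x` (squared
Hellinger distance is dominated by KL) and `|x - 1| = |√x - 1| (√x + 1)` with AM-GM.
-/

open InformationTheory
open scoped ENNReal

lemma sq_sqrt_sub_one_le_klFun {x : ℝ} (hx : 0 ≤ x) : (√x - 1) ^ 2 ≤ klFun x := by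
  rcases hx.eq_or_lt with rfl | hx
  · simp [klFun_zero]
  obtain ⟨s, hs, rfl⟩ : ∃ s, 0 < s ∧ x = s ^ 2 :=
    ⟨√x, Real.sqrt_pos.mpr hx, (Real.sq_sqrt hx.le).symm⟩
  have hlog : s ^ 2 - s ≤ s ^ 2 * Real.log s := by
    have := mul_le_mul_of_nonneg_left (Real.one_sub_inv_le_log_of_pos hs) (sq_nonneg s)
    rwa [mul_sub, mul_one, sq, mul_assoc, mul_inv_cancel₀ hs.ne', mul_one, ← sq] at this
  rw [Real.sqrt_sq hs.le, klFun_apply, Real.log_pow]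
  push_cast
  nlinarith

lemma two_mul_mul_abs_sub_one_le {x : ℝ} (hx : 0 ≤ x) (t : ℝ) :
    2 * t * |x - 1| ≤ 2 * t ^ 2 * (x + 1) + klFun x := by
  have hkl := sq_sqrt_sub_one_le_klFun hx
  obtain ⟨s, hs, rfl⟩ : ∃ s, 0 ≤ s ∧ x = s ^ 2 :=
    ⟨√x, Real.sqrt_nonneg x, (Real.sq_sqrt hx).symm⟩
  rw [Real.sqrt_sq hs] at hkl
  have habs : |s ^ 2 - 1| = |s - 1| * (s + 1) := by
    rw [show s ^ 2 - 1 = (s - 1) * (s + 1) by ring, abs_mul,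
      abs_of_nonneg (by positivity : 0 ≤ s + 1)]
  rw [habs]
  nlinarith [sq_nonneg (t * (s + 1) - |s - 1|), sq_abs (s - 1), sq_nonneg (s - 1)]

section KullbackLeibler

variable {Z : Type*} [MeasurableSpace Z] {π μ : Measure Z}

lemma totalVariation_toSignedMeasure_sub_le_withDensity [IsFiniteMeasure π] [IsFiniteMeasure μ]
    (hπμ : π ≪ μ) :
    (π.toSignedMeasure - μ.toSignedMeasure).totalVariation ≤
      μ.withDensity fun z ↦ ‖(π.rnDeriv μ z).toReal - 1‖ₑ := by
  rw [SignedMeasure.totalVariation_eq_variation]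
  refine VectorMeasure.variation_le_of_forall_enorm_le fun E hE ↦ ?_
  have hE_eq : (π.toSignedMeasure - μ.toSignedMeasure) E =
      ∫ z in E, ((π.rnDeriv μ z).toReal - 1) ∂μ := by
    rw [sub_apply, Measure.toSignedMeasure_apply_measurable hE,
      Measure.toSignedMeasure_apply_measurable hE,
      integral_sub Measure.integrable_toReal_rnDeriv.integrableOn
        (integrable_const 1).integrableOn,
      Measure.setIntegral_toReal_rnDeriv hπμ, setIntegral_const]
    simp [measureReal_def]
  rw [hE_eq, withDensity_apply _ hE]
  exact enorm_integral_le_lintegral_enorm _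

theorem totalVariation_toSignedMeasure_sub_le_two_mul_sqrt_klDiv
    [IsProbabilityMeasure π] [IsProbabilityMeasure μ] (h : klDiv π μ ≠ ∞) :
    (π.toSignedMeasure - μ.toSignedMeasure).totalVariation Set.univ ≤
      ENNReal.ofReal (2 * √(klDiv π μ).toReal) := by
  obtain ⟨hπμ, hllr⟩ := klDiv_ne_top_iff.mp h
  set f : Z → ℝ := fun z ↦ (π.rnDeriv μ z).toReal
  have hf : Integrable f μ := Measure.integrable_toReal_rnDeriv
  have hf_one : ∫ z, f z ∂μ = 1 := by simp [f, Measure.integral_toReal_rnDeriv hπμ]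
  have hklFun : Integrable (fun z ↦ klFun (f z)) μ :=
    (integrable_klFun_rnDeriv_iff hπμ).mpr hllr
  have habs : Integrable (fun z ↦ |f z - 1|) μ := (hf.sub (integrable_const 1)).abs
  set a := ∫ z, |f z - 1| ∂μ
  have hTV : (π.toSignedMeasure - μ.toSignedMeasure).totalVariation Set.univ ≤
      ENNReal.ofReal a := by
    refine (totalVariation_toSignedMeasure_sub_le_withDensity hπμ Set.univ).trans_eq ?_
    rw [withDensity_apply _ MeasurableSet.univ, setLIntegral_univ,
      ofReal_integral_eq_lintegral_ofReal habs (ae_of_all _ fun _ ↦ abs_nonneg _)]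
    simp_rw [Real.enorm_eq_ofReal_abs, f]
  -- the AM-GM scale `t = a / 4` optimises the integrated bound `2 t a ≤ 4 t² + KL`
  have ha_sq : a ^ 2 ≤ 4 * ∫ z, klFun (f z) ∂μ := by
    have hf_add : Integrable (fun z ↦ f z + 1) μ := hf.add (integrable_const 1)
    have hmono : ∫ z, 2 * (a / 4) * |f z - 1| ∂μ ≤
        ∫ z, (2 * (a / 4) ^ 2 * (f z + 1) + klFun (f z)) ∂μ :=
      integral_mono (habs.const_mul _) ((hf_add.const_mul _).add hklFun)
        fun z ↦ two_mul_mul_abs_sub_one_le ENNReal.toReal_nonneg (a / 4)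
    rw [integral_const_mul, integral_add (hf_add.const_mul _) hklFun, integral_const_mul,
      integral_add hf (integrable_const 1), hf_one] at hmono
    simp only [integral_const, probReal_univ, smul_eq_mul, one_mul] at hmono
    nlinarith
  rw [toReal_klDiv_eq_integral_klFun hπμ]
  refine hTV.trans (ENNReal.ofReal_le_ofReal ?_)
  have hk : 0 ≤ ∫ z, klFun (f z) ∂μ :=
    integral_nonneg fun _ ↦ klFun_nonneg ENNReal.toReal_nonneg
  have : a / 2 ≤ √(∫ z, klFun (f z) ∂μ) :=
    (Real.le_sqrt (by positivity) hk).mpr (by nlinarith)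
  linarith

lemma klE_eq_klDiv [IsProbabilityMeasure π] [IsProbabilityMeasure μ] :
    klE π μ = klDiv π μ := by
  by_cases hfin : π ≪ μ ∧ Integrable (llr π μ) π
  · rw [klE, if_pos hfin, ← EReal.coe_ennreal_toReal (klDiv_ne_top hfin.1 hfin.2),
      toReal_klDiv_of_measure_eq hfin.1 (by simp)]
  · rw [klE, if_neg hfin, klDiv_eq_top_iff.mpr fun hπμ ↦ (not_and.mp hfin) hπμ,
      EReal.coe_ennreal_top]

end KullbackLeibler

lemma otE_le_integral_prod {X Y : Type*} [MeasurableSpace X] [MeasurableSpace Y]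
    (c : X → Y → ℝ) (ε : ℝ) (α : Measure X) (β : Measure Y)
    [IsProbabilityMeasure α] [IsProbabilityMeasure β] :
    otE c ε α β ≤ ((∫ p, c p.1 p.2 ∂(α.prod β) : ℝ) : EReal) :=
  (iInf₂_le (α.prod β) ⟨by simp, by simp⟩).trans_eq (by simp [klE_eq_klDiv])

lemma ENNReal.le_ofReal_div_of_coe_add_mul_le {k : ℝ≥0∞} {a ε C : ℝ} (ha : 0 ≤ a)
    (hε : 0 < ε) (h : (a : EReal) + ε * k ≤ C) : k ≤ ENNReal.ofReal (C / ε) := by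
  by_cases hk : k = ∞
  · rw [hk, EReal.coe_ennreal_top, EReal.mul_top_of_pos (by exact_mod_cast hε),
      EReal.coe_add_top] at h
    exact absurd h (EReal.coe_lt_top C).not_ge
  rw [← EReal.coe_ennreal_toReal hk, ← EReal.coe_mul, ← EReal.coe_add,
    EReal.coe_le_coe_iff] at h
  have hk_nonneg : 0 ≤ k.toReal := ENNReal.toReal_nonneg
  rw [ENNReal.le_ofReal_iff_toReal_le hk (div_nonneg (by nlinarith) hε.le), le_div_iff₀ hε]
  linarith

theorem optimal_plans_tendsto_product_tv_general
    {X Y : Type*} [MeasurableSpace X] [MeasurableSpace Y]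
    (c : X → Y → ℝ)
    (hnonneg : ∀ x y, 0 ≤ c x y)
    (α : Measure X) (β : Measure Y) [IsProbabilityMeasure α] [IsProbabilityMeasure β]
    (πε : ℝ → Measure (X × Y)) [∀ ε, IsProbabilityMeasure (πε ε)]
    (hopt : ∀ ε : ℝ, 0 < ε →
      ((∫ p, c p.1 p.2 ∂(πε ε) : ℝ) : EReal) + (ε : EReal) * klE (πε ε) (α.prod β)
        = otE c ε α β) :
    Tendsto (fun ε : ℝ =>
        ((πε ε).toSignedMeasure - (α.prod β).toSignedMeasure).totalVariation Set.univ)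
      atTop (nhds 0) := by
  have hcost (ν : Measure (X × Y)) : 0 ≤ ∫ p, c p.1 p.2 ∂ν :=
    integral_nonneg fun _ ↦ hnonneg _ _
  set C := ∫ p, c p.1 p.2 ∂(α.prod β)
  have hKL (ε : ℝ) (hε : 0 < ε) : klDiv (πε ε) (α.prod β) ≤ ENNReal.ofReal (C / ε) := by
    refine ENNReal.le_ofReal_div_of_coe_add_mul_le (hcost (πε ε)) hε ?_
    rw [← klE_eq_klDiv, hopt ε hε]
    exact otE_le_integral_prod c ε α β
  have hTV (ε : ℝ) (hε : 0 < ε) :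
      ((πε ε).toSignedMeasure - (α.prod β).toSignedMeasure).totalVariation Set.univ ≤
        ENNReal.ofReal (2 * √(C / ε)) := by
    refine (totalVariation_toSignedMeasure_sub_le_two_mul_sqrt_klDiv
      (ne_top_of_le_ne_top ENNReal.ofReal_ne_top (hKL ε hε))).trans ?_
    gcongr
    exact ENNReal.toReal_le_of_le_ofReal (div_nonneg (hcost _) hε.le) (hKL ε hε)
  have hbound : Tendsto (fun ε : ℝ ↦ ENNReal.ofReal (2 * √(C / ε))) atTop (nhds 0) := by
    simpa using ENNReal.tendsto_ofReal
      (((tendsto_const_nhds.div_atTop tendsto_id).sqrt).const_mul 2)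
  exact tendsto_of_tendsto_of_tendsto_of_le_of_le' tendsto_const_nhds hbound
    (Eventually.of_forall fun _ ↦ zero_le) ((eventually_gt_atTop 0).mono hTV)

/-- optimal entropic plans converge in total variation to the product
measure as `ε → ∞`. -/
theorem optimal_plans_tendsto_product_tv
    {X Y : Type*} [MetricSpace X] [CompactSpace X] [MeasurableSpace X] [BorelSpace X]
    [MetricSpace Y] [CompactSpace Y] [MeasurableSpace Y] [BorelSpace Y]
    (c : X → Y → ℝ) (hc : Continuous fun p : X × Y => c p.1 p.2)
    (hnonneg : ∀ x y, 0 ≤ c x y)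
    (α : Measure X) (β : Measure Y) [IsProbabilityMeasure α] [IsProbabilityMeasure β]
    (πε : ℝ → Measure (X × Y)) [∀ ε, IsProbabilityMeasure (πε ε)]
    (hmarg1 : ∀ ε : ℝ, 0 < ε → (πε ε).map Prod.fst = α)
    (hmarg2 : ∀ ε : ℝ, 0 < ε → (πε ε).map Prod.snd = β)
    (hopt : ∀ ε : ℝ, 0 < ε →
      ((∫ p, c p.1 p.2 ∂(πε ε) : ℝ) : EReal) + (ε : EReal) * klE (πε ε) (α.prod β)
        = otE c ε α β) :
    Tendsto (fun ε : ℝ =>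
        ((πε ε).toSignedMeasure - (α.prod β).toSignedMeasure).totalVariation Set.univ)
      atTop (nhds 0) :=
  optimal_plans_tendsto_product_tv_general c hnonneg α β πε hopt
end
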